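/- arXiv:2409.13574 — 2 statements merged into one kernel-verified Lean document; each statement's English description precedes it below -/
import Mathlib

section
/- Let k₀ be a real multiquadratic field, σ₁, σ₂ distinct elements of order 2 in Gal(k₀/ℚ), and k₁, k₂, k₃ the subfields fixed by σ₁, σ₂, σ₃ = σ₁σ₂ respectively. Then for any unit ε of k₀, ε² = (εε^{σ₁})(εε^{σ₂})(ε^{σ₁}ε^{σ₂})^{−1}, with εε^{σ₁} ∈ E_{k₁}, εε^{σ₂} ∈ E_{k₂}, and ε^{σ₁}ε^{σ₂} ∈ E_{k₃}. Consequently the unit group of k₀ is generated by E_{k₁}, E_{k₂}, E_{k₃} together with square roots of those elements of E_{k₁}E_{k₂}E_{k₃} which are squares in k₀. -/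
open NumberField IntermediateField

/-- The units of the ring of integers of `k₀` lying in the subfield `L`, as a
subgroup of `k₀ˣ`. -/
noncomputable def unitsIn (k₀ : Type*) [Field k₀] [NumberField k₀]
    (L : IntermediateField ℚ k₀) : Subgroup k₀ˣ where
  carrier := {u | (u : k₀) ∈ L ∧ IsIntegral ℤ (u : k₀) ∧ IsIntegral ℤ ((u⁻¹ : k₀ˣ) : k₀)}
  one_mem' := ⟨one_mem L, isIntegral_one, by simpa using isIntegral_one⟩
  mul_mem' := by
    rintro a b ⟨ha1, ha2, ha3⟩ ⟨hb1, hb2, hb3⟩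
    exact ⟨mul_mem ha1 hb1, by simpa using ha2.mul hb2,
      by simpa [mul_comm] using ha3.mul hb3⟩
  inv_mem' := by
    rintro a ⟨h1, h2, h3⟩
    exact ⟨by simpa using L.inv_mem h1, h3, by simpa using h2⟩


section WadaAux

variable {k₀ : Type*} [Field k₀] [NumberField k₀]

lemma wada_fixed_mem (σ : k₀ ≃ₐ[ℚ] k₀) (hσ : σ * σ = 1) (x : k₀) (hx : σ x = x) :
    x ∈ fixedField (Subgroup.zpowers σ) := by
  rintro ⟨g, n, rfl⟩
  show (σ ^ n) x = x
  have h2 : σ ^ (2 : ℤ) = 1 := by rw [zpow_two]; exact_mod_cast hσ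
  obtain ⟨q, hq | hq⟩ := Int.even_or_odd' n
  · rw [hq, zpow_mul, h2, one_zpow]; rfl
  · rw [hq, zpow_add, zpow_mul, h2, one_zpow, one_mul, zpow_one]; exact hx

lemma wada_integral_map (σ : k₀ ≃ₐ[ℚ] k₀) {x : k₀} (hx : IsIntegral ℤ x) :
    IsIntegral ℤ (σ x) :=
  hx.map (σ : k₀ →+* k₀).toIntAlgHom

lemma wada_map_mem_top (σ : k₀ ≃ₐ[ℚ] k₀) {ε : k₀ˣ} (h : ε ∈ unitsIn k₀ ⊤) :
    Units.map (σ : k₀ →* k₀) ε ∈ unitsIn k₀ ⊤ := by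
  refine ⟨trivial, ?_, ?_⟩
  · simpa using wada_integral_map σ h.2.1
  · rw [← map_inv (Units.map (σ : k₀ →* k₀)) ε]
    simpa using wada_integral_map σ h.2.2

lemma wada_mem_of_top {L : IntermediateField ℚ k₀} {u : k₀ˣ}
    (h1 : (u : k₀) ∈ L) (h2 : u ∈ unitsIn k₀ ⊤) : u ∈ unitsIn k₀ L :=
  ⟨h1, h2.2.1, h2.2.2⟩

lemma wada_le_top (L : IntermediateField ℚ k₀) : unitsIn k₀ L ≤ unitsIn k₀ ⊤ :=
  fun _ hu => ⟨trivial, hu.2.1, hu.2.2⟩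

end WadaAux

/-- **Wada's method for units of multiquadratic fields.** Let `k₀` be a totally real
multiquadratic field, `σ₁ ≠ σ₂` of order 2 in `Gal(k₀/ℚ)` and `k₁, k₂, k₃` the fixed
fields of `σ₁`, `σ₂`, `σ₃ = σ₁σ₂`. Every unit `ε` satisfies
`ε² = (εε^{σ₁})(εε^{σ₂})(ε^{σ₁}ε^{σ₂})⁻¹` with the three factors being units of
`k₁`, `k₂`, `k₃` respectively; consequently the unit group of `k₀` is generated by
the units of `k₁`, `k₂`, `k₃` together with the square roots of those elements of
`E_{k₁}E_{k₂}E_{k₃}` that are squares in `k₀`. -/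
theorem wada_unit_method
    (k₀ : Type*) [Field k₀] [NumberField k₀]
    (hreal : ∀ (φ : k₀ →+* ℂ) (x : k₀), (φ x).im = 0)
    (hgal : IsGalois ℚ k₀)
    (helem : ∀ σ : k₀ ≃ₐ[ℚ] k₀, σ * σ = 1)
    (σ₁ σ₂ : k₀ ≃ₐ[ℚ] k₀) (hne : σ₁ ≠ σ₂) (hσ₁ : σ₁ ≠ 1) (hσ₂ : σ₂ ≠ 1)
    (k₁ k₂ k₃ : IntermediateField ℚ k₀)
    (hk₁ : k₁ = fixedField (Subgroup.zpowers σ₁))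
    (hk₂ : k₂ = fixedField (Subgroup.zpowers σ₂))
    (hk₃ : k₃ = fixedField (Subgroup.zpowers (σ₁ * σ₂))) :
    (∀ ε : k₀ˣ, ε ∈ unitsIn k₀ ⊤ →
      (ε : k₀) ^ 2 =
        ((ε : k₀) * σ₁ (ε : k₀)) * ((ε : k₀) * σ₂ (ε : k₀)) *
          (σ₁ (ε : k₀) * σ₂ (ε : k₀))⁻¹ ∧
      (∃ u ∈ unitsIn k₀ k₁, (u : k₀) = (ε : k₀) * σ₁ (ε : k₀)) ∧
      (∃ u ∈ unitsIn k₀ k₂, (u : k₀) = (ε : k₀) * σ₂ (ε : k₀)) ∧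
      (∃ u ∈ unitsIn k₀ k₃, (u : k₀) = σ₁ (ε : k₀) * σ₂ (ε : k₀))) ∧
    unitsIn k₀ ⊤ =
      Subgroup.closure ((unitsIn k₀ k₁ : Set k₀ˣ) ∪ (unitsIn k₀ k₂ : Set k₀ˣ) ∪
        (unitsIn k₀ k₃ : Set k₀ˣ) ∪
        {u : k₀ˣ | u ^ 2 ∈ unitsIn k₀ k₁ ⊔ unitsIn k₀ k₂ ⊔ unitsIn k₀ k₃}) := by
  -- involutivity facts
  have hinv : ∀ σ : k₀ ≃ₐ[ℚ] k₀, ∀ x : k₀, σ (σ x) = x := by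
    intro σ x
    rw [← AlgEquiv.mul_apply, helem σ, AlgEquiv.one_apply]
  have hcomm : σ₁ * σ₂ = σ₂ * σ₁ := by
    have h12 := helem (σ₁ * σ₂)
    calc σ₁ * σ₂ = (σ₁ * σ₂)⁻¹ := (inv_eq_of_mul_eq_one_right h12).symm
    _ = σ₂⁻¹ * σ₁⁻¹ := mul_inv_rev _ _
    _ = σ₂ * σ₁ := by
        rw [inv_eq_of_mul_eq_one_right (helem σ₁), inv_eq_of_mul_eq_one_right (helem σ₂)]
  have main : ∀ ε : k₀ˣ, ε ∈ unitsIn k₀ ⊤ →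
      (ε : k₀) ^ 2 =
        ((ε : k₀) * σ₁ (ε : k₀)) * ((ε : k₀) * σ₂ (ε : k₀)) *
          (σ₁ (ε : k₀) * σ₂ (ε : k₀))⁻¹ ∧
      (∃ u ∈ unitsIn k₀ k₁, (u : k₀) = (ε : k₀) * σ₁ (ε : k₀)) ∧
      (∃ u ∈ unitsIn k₀ k₂, (u : k₀) = (ε : k₀) * σ₂ (ε : k₀)) ∧
      (∃ u ∈ unitsIn k₀ k₃, (u : k₀) = σ₁ (ε : k₀) * σ₂ (ε : k₀)) := by
    intro ε hε
    have hne0 : (ε : k₀) ≠ 0 := ε.ne_zero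
    have h1ne : σ₁ (ε : k₀) ≠ 0 := by simpa using hne0
    have h2ne : σ₂ (ε : k₀) ≠ 0 := by simpa using hne0
    refine ⟨by field_simp, ?_, ?_, ?_⟩
    · refine ⟨ε * Units.map (σ₁ : k₀ →* k₀) ε, ?_, by simp⟩
      refine wada_mem_of_top ?_ (mul_mem hε (wada_map_mem_top σ₁ hε))
      rw [hk₁]
      refine wada_fixed_mem σ₁ (helem σ₁) _ ?_
      simp only [Units.val_mul, Units.coe_map, MonoidHom.coe_coe, map_mul, hinv σ₁]
      ring
    · refine ⟨ε * Units.map (σ₂ : k₀ →* k₀) ε, ?_, by simp⟩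
      refine wada_mem_of_top ?_ (mul_mem hε (wada_map_mem_top σ₂ hε))
      rw [hk₂]
      refine wada_fixed_mem σ₂ (helem σ₂) _ ?_
      simp only [Units.val_mul, Units.coe_map, MonoidHom.coe_coe, map_mul, hinv σ₂]
      ring
    · refine ⟨Units.map (σ₁ : k₀ →* k₀) ε * Units.map (σ₂ : k₀ →* k₀) ε, ?_, by simp⟩
      refine wada_mem_of_top ?_ (mul_mem (wada_map_mem_top σ₁ hε) (wada_map_mem_top σ₂ hε))
      rw [hk₃]
      refine wada_fixed_mem _ (helem (σ₁ * σ₂)) _ ?_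
      have happ : ∀ x : k₀, σ₁ (σ₂ x) = σ₂ (σ₁ x) := fun x => by
        rw [← AlgEquiv.mul_apply, hcomm, AlgEquiv.mul_apply]
      have e1 : (σ₁ * σ₂) (σ₁ (ε : k₀)) = σ₂ (ε : k₀) := by
        rw [AlgEquiv.mul_apply, happ, hinv σ₁]
      have e2 : (σ₁ * σ₂) (σ₂ (ε : k₀)) = σ₁ (ε : k₀) := by
        rw [AlgEquiv.mul_apply, hinv σ₂]
      simp only [Units.val_mul, Units.coe_map, MonoidHom.coe_coe, map_mul]
      rw [e1, e2]
      ring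
  refine ⟨main, le_antisymm ?_ ?_⟩
  · intro ε hε
    obtain ⟨heq, ⟨u₁, hu₁, e₁⟩, ⟨u₂, hu₂, e₂⟩, ⟨u₃, hu₃, e₃⟩⟩ := main ε hε
    apply Subgroup.subset_closure
    refine Set.mem_union_right _ ?_
    show ε ^ 2 ∈ unitsIn k₀ k₁ ⊔ unitsIn k₀ k₂ ⊔ unitsIn k₀ k₃
    have hval : ε ^ 2 = u₁ * u₂ * u₃⁻¹ := by
      ext
      push_cast
      rw [heq, e₁, e₂, e₃]
    rw [hval]
    exact mul_mem (mul_mem (Subgroup.mem_sup_left (Subgroup.mem_sup_left hu₁))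
        (Subgroup.mem_sup_left (Subgroup.mem_sup_right hu₂)))
      (inv_mem (Subgroup.mem_sup_right hu₃))
  · rw [Subgroup.closure_le]
    rintro u (((h | h) | h) | h)
    · exact wada_le_top k₁ h
    · exact wada_le_top k₂ h
    · exact wada_le_top k₃ h
    · have h2 : u ^ 2 ∈ unitsIn k₀ ⊤ :=
        sup_le (sup_le (wada_le_top k₁) (wada_le_top k₂)) (wada_le_top k₃) h
      refine ⟨trivial, ?_, ?_⟩
      · refine IsIntegral.of_pow (two_pos) ?_
        have := h2.2.1
        rwa [Units.val_pow_eq_pow_val] at this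
      · refine IsIntegral.of_pow (two_pos) ?_
        have := h2.2.2
        rwa [← inv_pow, Units.val_pow_eq_pow_val] at this
end

section
/- Let s be a prime with s ≡ 3 (mod 4). Then the fundamental unit ε_s of ℚ(√s) satisfies ε_s = 2u² for some u ∈ ℚ(√s); equivalently, 2ε_s is a square in ℚ(√s). -/
open NumberField Polynomial


/-- The group of units of the ring of integers of a subfield `K` of `ℂ`,
viewed as a subgroup of `ℂˣ`: units `u` lying in `K` such that both `u` and
`u⁻¹` are algebraic integers. -/
noncomputable def unitsOf (K : IntermediateField ℚ ℂ) : Subgroup ℂˣ where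
  carrier := {u | (u : ℂ) ∈ K ∧ IsIntegral ℤ (u : ℂ) ∧ IsIntegral ℤ ((u⁻¹ : ℂˣ) : ℂ)}
  one_mem' := ⟨one_mem K, isIntegral_one, by simpa using isIntegral_one⟩
  mul_mem' := by
    rintro a b ⟨ha1, ha2, ha3⟩ ⟨hb1, hb2, hb3⟩
    exact ⟨mul_mem ha1 hb1, by simpa using ha2.mul hb2, by simpa [mul_comm] using ha3.mul hb3⟩
  inv_mem' := by
    rintro a ⟨h1, h2, h3⟩
    exact ⟨by simpa using K.inv_mem h1, h3, by simpa using h2⟩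

/-- `u` is the fundamental unit of the real field `K ⊆ ℂ`: it is a real unit `> 1`
of the ring of integers of `K` and every unit of `K` is `±u^n` for some `n : ℤ`. -/
def IsFundamentalUnit (K : IntermediateField ℚ ℂ) (u : ℂˣ) : Prop :=
  u ∈ unitsOf K ∧ (u : ℂ).im = 0 ∧ 1 < (u : ℂ).re ∧
  ∀ v ∈ unitsOf K, ∃ n : ℤ, v = u ^ n ∨ v = -u ^ n

/-- The real quadratic field `ℚ(√d)`, realized inside `ℂ`. -/
noncomputable def quadF (d : ℕ) : IntermediateField ℚ ℂ :=
  IntermediateField.adjoin ℚ {((Real.sqrt d : ℝ) : ℂ)}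

section aux

lemma sqrt_mem (s : ℕ) : ((Real.sqrt s : ℝ) : ℂ) ∈ quadF s :=
  IntermediateField.subset_adjoin ℚ _ rfl

lemma rat_mem (s : ℕ) (q : ℚ) : (q : ℂ) ∈ quadF s := by
  simpa using IntermediateField.algebraMap_mem (quadF s) q

lemma repr_mem (s : ℕ) (p q : ℚ) : (p : ℂ) + q * ((Real.sqrt s : ℝ) : ℂ) ∈ quadF s :=
  add_mem (rat_mem s p) (mul_mem (rat_mem s q) (sqrt_mem s))

lemma rc_sq (s : ℕ) : (((Real.sqrt s : ℝ) : ℂ))^2 = (s : ℂ) := by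
  rw [← Complex.ofReal_pow, Real.sq_sqrt (by positivity : (0:ℝ) ≤ (s:ℝ))]
  simp

lemma rc_int (s : ℕ) : IsIntegral ℤ (((Real.sqrt s : ℝ) : ℂ)) := by
  refine ⟨X^2 - C (s : ℤ), monic_X_pow_sub_C _ (by norm_num), ?_⟩
  simp [rc_sq s]

lemma rat_of_integral {x : ℚ} (h : IsIntegral ℤ ((x : ℂ))) : ∃ n : ℤ, (n : ℚ) = x := by
  have : IsIntegral ℤ x := by
    rw [← isIntegral_algebraMap_iff (algebraMap ℚ ℂ).injective]
    simpa using h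
  exact IsIntegrallyClosed.isIntegral_iff.mp this

lemma repr_exists' {s : ℕ} (hs : s.Prime) {x : ℂ} (hx : x ∈ quadF s) :
    ∃ p q : ℚ, x = (p : ℂ) + q * ((Real.sqrt s : ℝ) : ℂ) := by
  set rc : ℂ := ((Real.sqrt s : ℝ) : ℂ) with hrc
  have hirr : Irrational (Real.sqrt s) := Nat.Prime.irrational_sqrt hs
  have hsq : rc ^ 2 = (s : ℂ) := rc_sq s
  -- the candidate subfield
  let S : Subfield ℂ :=
  { carrier := {x | ∃ p q : ℚ, x = (p : ℂ) + q * rc}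
    zero_mem' := ⟨0, 0, by simp⟩
    one_mem' := ⟨1, 0, by simp⟩
    add_mem' := by
      rintro a b ⟨p, q, rfl⟩ ⟨p', q', rfl⟩
      exact ⟨p + p', q + q', by push_cast; ring⟩
    neg_mem' := by
      rintro a ⟨p, q, rfl⟩
      exact ⟨-p, -q, by push_cast; ring⟩
    mul_mem' := by
      rintro a b ⟨p, q, rfl⟩ ⟨p', q', rfl⟩
      refine ⟨p * p' + s * (q * q'), p * q' + p' * q, ?_⟩
      have : ((p:ℂ) + q * rc) * ((p':ℂ) + q' * rc)
          = (p*p' : ℂ) + (q*q') * rc^2 + ((p*q' + p'*q : ℂ)) * rc := by ring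
      rw [this, hsq]; push_cast; ring
    inv_mem' := by
      rintro a ⟨p, q, rfl⟩
      by_cases hq : q = 0
      · subst hq
        exact ⟨p⁻¹, 0, by push_cast; simp⟩
      · have hN : (p^2 - s * q^2 : ℚ) ≠ 0 := by
          intro h
          apply hirr
          refine ⟨|p / q|, ?_⟩
          have hq2 : ((q:ℝ))^2 ≠ 0 := by positivity
          have hps : ((p:ℝ))^2 = s * (q:ℝ)^2 := by
            have := congrArg (Rat.cast : ℚ → ℝ) h
            push_cast at this; linarith
          have hsval : (s:ℝ) = (((p/q : ℚ)):ℝ)^2 := by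
            push_cast
            rw [div_pow]
            field_simp [hps]
            linarith [hps]
          calc ((|p/q| : ℚ) : ℝ) = |((p/q : ℚ) : ℝ)| := by push_cast; ring
            _ = Real.sqrt ((((p/q:ℚ)):ℝ)^2) := (Real.sqrt_sq_eq_abs _).symm
            _ = Real.sqrt s := by rw [← hsval]
        refine ⟨p / (p^2 - s*q^2), -q / (p^2 - s*q^2), ?_⟩
        have hden : ((p:ℂ) + q*rc) * ((p:ℂ) - q*rc) = ((p^2 - s*q^2 : ℚ) : ℂ) := by
          have : ((p:ℂ) + q*rc) * ((p:ℂ) - q*rc) = (p:ℂ)^2 - q^2 * rc^2 := by ring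
          rw [this, hsq]; push_cast; ring
        have hNc : ((p^2 - s*q^2 : ℚ) : ℂ) ≠ 0 := by exact_mod_cast hN
        have key : ((p:ℂ) + q*rc) * (((p / (p^2 - s*q^2) : ℚ):ℂ) + ((-q / (p^2 - s*q^2) : ℚ):ℂ) * rc) = 1 := by
          have expand : ((p:ℂ) + q*rc) * (((p / (p^2 - s*q^2) : ℚ):ℂ) + ((-q / (p^2 - s*q^2) : ℚ):ℂ) * rc)
              = (((p:ℂ) + q*rc) * ((p:ℂ) - q*rc)) * (((p^2 - s*q^2 : ℚ):ℂ))⁻¹ := by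
            push_cast
            field_simp
            ring
          rw [expand, hden, mul_inv_cancel₀ hNc]
        exact inv_eq_of_mul_eq_one_right key }
  have hle : quadF s ≤ S.toIntermediateField (fun x => ⟨x, 0, by simp⟩) := by
    rw [quadF, IntermediateField.adjoin_le_iff]
    rintro x rfl
    exact ⟨0, 1, by simp [hrc]⟩
  exact hle hx

lemma repr_unique {s : ℕ} (hs : s.Prime) {p q : ℚ}
    (h : (p : ℂ) + q * ((Real.sqrt s : ℝ) : ℂ) = 0) : p = 0 ∧ q = 0 := by
  have hirr : Irrational (Real.sqrt s) := Nat.Prime.irrational_sqrt hs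
  by_cases hq : q = 0
  · subst hq
    simp only [Rat.cast_zero, zero_mul, add_zero] at h
    exact ⟨by exact_mod_cast h, rfl⟩
  · exfalso
    apply hirr
    refine ⟨-p/q, ?_⟩
    have hqc : (q:ℂ) ≠ 0 := by exact_mod_cast hq
    have hkey : (((-p/q : ℚ)) : ℂ) = ((Real.sqrt s : ℝ) : ℂ) := by
      push_cast
      field_simp
      linear_combination -h
    rw [← Complex.ofReal_ratCast (-p/q)] at hkey
    exact_mod_cast hkey

lemma int_repr_aux (s : ℕ) (hs : s.Prime) (hs4 : s % 4 = 3) (p q : ℚ) (hq : q ≠ 0)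
    (x : ℂ) (hx : x = (p:ℂ) + q * ((Real.sqrt s : ℝ) : ℂ))
    (hxi : IsIntegral ℤ x) :
    ∃ a b : ℤ, (p:ℚ) = (a:ℚ) ∧ (q:ℚ) = (b:ℚ) := by
  set rc : ℂ := ((Real.sqrt s : ℝ) : ℂ) with hrc
  have hsq : rc ^ 2 = (s:ℂ) := by
    rw [hrc, ← Complex.ofReal_pow, Real.sq_sqrt (by positivity : (0:ℝ) ≤ (s:ℝ))]
    simp
  have hirr : Irrational (Real.sqrt s) := Nat.Prime.irrational_sqrt hs
  set g : ℚ[X] := X^2 - C (2*p) * X + C (p^2 - s*q^2) with hg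
  have hmon : g.Monic := by
    rw [hg]; monicity!
  have hroot : Polynomial.aeval x g = 0 := by
    rw [hg, hx]
    simp only [map_add, map_sub, map_mul, map_pow, aeval_X, aeval_C, eq_ratCast]
    push_cast
    linear_combination (q:ℂ)^2 * hsq
  have hQint : IsIntegral ℚ x := hxi.tower_top
  have hdvd : minpoly ℚ x ∣ g := minpoly.dvd ℚ x hroot
  have hnotrange : x ∉ (algebraMap ℚ ℂ).range := by
    rintro ⟨r, hr⟩
    apply hirr
    rw [eq_ratCast] at hr
    refine ⟨(r - p)/q, ?_⟩
    have hqc : (q:ℂ) ≠ 0 := by exact_mod_cast hq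
    have hkey : ((((r-p)/q : ℚ)) : ℂ) = rc := by
      push_cast
      field_simp
      linear_combination hr.trans hx
    rw [hrc, ← Complex.ofReal_ratCast ((r-p)/q)] at hkey
    exact_mod_cast hkey
  have hdeg2 : (minpoly ℚ x).natDegree = 2 := by
    have h2 : 2 ≤ (minpoly ℚ x).natDegree := (minpoly.two_le_natDegree_iff hQint).mpr hnotrange
    have hle : (minpoly ℚ x).natDegree ≤ g.natDegree := natDegree_le_of_dvd hdvd hmon.ne_zero
    have : g.natDegree = 2 := by rw [hg]; compute_degree!
    omega
  have hgeq : g = minpoly ℚ x := by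
    refine eq_of_monic_of_dvd_of_natDegree_le (minpoly.monic hQint) hmon hdvd ?_
    have : g.natDegree = 2 := by rw [hg]; compute_degree!
    omega
  have hmap : minpoly ℚ x = (minpoly ℤ x).map (algebraMap ℤ ℚ) :=
    minpoly.isIntegrallyClosed_eq_field_fractions' ℚ hxi
  have hA : ((-(minpoly ℤ x).coeff 1 : ℤ) : ℚ) = 2*p := by
    have := congrArg (fun f => f.coeff 1) (hgeq.trans hmap)
    simp only [hg] at this
    simp only [coeff_add, coeff_sub, coeff_C_mul, coeff_X_pow, coeff_X, coeff_C, coeff_map,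
      eq_ratCast] at this
    norm_num at this
    push_cast
    linarith [this]
  set A : ℤ := -(minpoly ℤ x).coeff 1 with hA_def
  have hC0 : (((minpoly ℤ x).coeff 0 : ℤ) : ℚ) = p^2 - s*q^2 := by
    have := congrArg (fun f => f.coeff 0) (hgeq.trans hmap)
    simp only [hg] at this
    simp only [coeff_add, coeff_sub, coeff_C_mul, coeff_X_pow, coeff_X, coeff_C, coeff_map,
      eq_ratCast] at this
    norm_num at this
    linarith [this]
  set C0 : ℤ := (minpoly ℤ x).coeff 0 with hC0_def
  have hAc : ((A:ℚ):ℂ) = 2*(p:ℂ) := by rw [hA]; push_cast; ring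
  have hAint : IsIntegral ℤ ((A:ℂ)) := by
    have := isIntegral_algebraMap (R := ℤ) (A := ℂ) (x := A)
    simpa using this
  have hd : (2*(q:ℂ))*rc = x + x - (A:ℂ) := by
    rw [hx]
    rw [show ((A:ℤ):ℂ) = (((A:ℚ)):ℂ) by push_cast; ring, hAc]
    ring
  have hdint : IsIntegral ℤ ((2*(q:ℂ))*rc) := by
    rw [hd]; exact (hxi.add hxi).sub hAint
  have hrcint : IsIntegral ℤ rc := by
    refine ⟨X^2 - Polynomial.C (s : ℤ), monic_X_pow_sub_C _ (by norm_num), ?_⟩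
    simp [hsq]
  obtain ⟨W, hW⟩ := rat_of_integral (x := 2*q*s) (by
    have h1 : IsIntegral ℤ ((2*(q:ℂ))*rc*rc) := hdint.mul hrcint
    have : (2*(q:ℂ))*rc*rc = ((2*q*s : ℚ):ℂ) := by
      rw [mul_assoc, ← sq, hsq]; push_cast; ring
    rwa [this] at h1)
  obtain ⟨U, hU⟩ := rat_of_integral (x := 4*q^2*s) (by
    have h1 : IsIntegral ℤ (((2*(q:ℂ))*rc)^2) := by rw [sq]; exact hdint.mul hdint
    have h2 : ((2*(q:ℂ))*rc)^2 = ((4*q^2*s : ℚ):ℂ) := by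
      have : ((2*(q:ℂ))*rc)^2 = 4*(q:ℂ)^2*rc^2 := by ring
      rw [this, hsq]; push_cast; ring
    rwa [h2] at h1)
  have hWU : W^2 = U * s := by
    have : (W:ℚ)^2 = (U:ℚ) * s := by rw [hW, hU]; ring
    exact_mod_cast this
  have hsZ : Prime (s:ℤ) := Int.prime_iff_natAbs_prime.mpr (by simpa using hs)
  have hsW : (s:ℤ) ∣ W := hsZ.dvd_of_dvd_pow (n := 2) ⟨U, by linarith [hWU]⟩
  obtain ⟨B, hB⟩ := hsW
  have hsne : (s:ℚ) ≠ 0 := by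
    exact_mod_cast fun h => hs.ne_zero (by exact_mod_cast h)
  have hBq : (B:ℚ) = 2*q := by
    have h1 : ((s:ℚ)) * B = 2*q*s := by
      rw [← hW, hB]; push_cast; ring
    have h2 : (s:ℚ) * (B:ℚ) = (s:ℚ) * (2*q) := by linarith
    exact mul_left_cancel₀ hsne h2
  have hABC : A^2 - s*B^2 = 4*C0 := by
    have : (A:ℚ)^2 - s*(B:ℚ)^2 = 4*(C0:ℚ) := by
      rw [hA, hBq, hC0]; ring
    exact_mod_cast this
  -- parity argument mod 4
  have h4 : ((s:ℕ) : ZMod 4) = 3 := by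
    rw [← ZMod.natCast_mod, hs4]; rfl
  have e4 : ((A : ZMod 4))^2 = 3 * (B : ZMod 4)^2 := by
    have := congrArg (Int.cast : ℤ → ZMod 4) hABC
    push_cast at this
    rw [h4] at this
    have h40 : (4 : ZMod 4) = 0 := by decide
    linear_combination this + (C0 : ZMod 4) * h40
  have key : ∀ u v : ZMod 4, u^2 = 3*v^2 → (u = 0 ∨ u = 2) ∧ (v = 0 ∨ v = 2) := by decide
  obtain ⟨hu, hv⟩ := key _ _ e4
  have hAeven : (2:ℤ) ∣ A := by
    rcases hu with h | h
    · have : (4:ℤ) ∣ A := by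
        rwa [ZMod.intCast_zmod_eq_zero_iff_dvd] at h
        -- note: need (4:ℕ)
      omega
    · have : ((A - 2 : ℤ) : ZMod 4) = 0 := by push_cast; rw [h]; ring
      have : (4:ℤ) ∣ A - 2 := by
        rwa [ZMod.intCast_zmod_eq_zero_iff_dvd] at this
      omega
  have hBeven : (2:ℤ) ∣ B := by
    rcases hv with h | h
    · have : (4:ℤ) ∣ B := by
        rwa [ZMod.intCast_zmod_eq_zero_iff_dvd] at h
      omega
    · have : ((B - 2 : ℤ) : ZMod 4) = 0 := by push_cast; rw [h]; ring
      have : (4:ℤ) ∣ B - 2 := by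
        rwa [ZMod.intCast_zmod_eq_zero_iff_dvd] at this
      omega
  obtain ⟨a, ha2⟩ := hAeven
  obtain ⟨b, hb2⟩ := hBeven
  refine ⟨a, b, ?_, ?_⟩
  · have h5 : (2:ℚ) * a = 2 * p := by
      have := congrArg (fun z : ℤ => (z : ℚ)) ha2
      push_cast at this
      rw [hA] at this
      linarith
    linarith
  · have h5 : (2:ℚ) * b = 2 * q := by
      have := congrArg (fun z : ℤ => (z : ℚ)) hb2
      push_cast at this
      rw [hBq] at this
      linarith
    linarith

lemma int_repr {s : ℕ} (hs : s.Prime) (hs4 : s % 4 = 3) {x : ℂ}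
    (hxK : x ∈ quadF s) (hxi : IsIntegral ℤ x) :
    ∃ a b : ℤ, x = (a : ℂ) + (b : ℂ) * ((Real.sqrt s : ℝ) : ℂ) := by
  obtain ⟨p, q, hx⟩ := repr_exists' hs hxK
  by_cases hq : q = 0
  · subst hq
    simp only [Rat.cast_zero, zero_mul, add_zero] at hx
    obtain ⟨n, hn⟩ := rat_of_integral (x := p) (hx ▸ hxi)
    exact ⟨n, 0, by rw [hx, ← hn]; push_cast; ring⟩
  · obtain ⟨a, b, hp, hqb⟩ := int_repr_aux s hs hs4 p q hq x hx hxi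
    refine ⟨a, b, ?_⟩
    rw [hx, hp, hqb]
    push_cast
    ring

lemma sq_pos_of_coprime {a b c : ℤ} (h : IsCoprime a b) (heq : a * b = c ^ 2) (hpos : 0 < a) :
    ∃ d : ℤ, a = d ^ 2 := by
  obtain ⟨d, hd | hd⟩ := Int.sq_of_isCoprime h heq
  · exact ⟨d, hd⟩
  · exfalso; nlinarith [sq_nonneg d]

lemma nt_core (s a b : ℤ) (hsp : Prime s) (hspos : 0 < s) (hodd : s % 2 = 1)
    (hneg : ∀ z : ℤ, ¬ s ∣ z^2 + 1)
    (ha : 2 ≤ a) (hb : 1 ≤ b) (h : a^2 - s*b^2 = 1) :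
    (∃ m n : ℤ, n^2 + s*m^2 = 2*a ∧ n*m = b) ∨
    (∃ m n : ℤ, n^2 + s*m^2 = a ∧ 2*(n*m) = b ∧ n^2 - s*m^2 = 1) := by
  have hfact : (a-1)*(a+1) = s*b^2 := by linear_combination h
  rcases Int.even_or_odd a with ⟨k, hk⟩ | ⟨k, hk⟩
  · -- a even; always the "good" case
    left
    have hcop : IsCoprime (a-1) (a+1) := by
      rw [Int.isCoprime_iff_gcd_eq_one]
      have h1 : (Int.gcd (a-1) (a+1) : ℤ) ∣ (a-1) := Int.gcd_dvd_left _ _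
      have h2 : (Int.gcd (a-1) (a+1) : ℤ) ∣ (a+1) := Int.gcd_dvd_right _ _
      have h3 : (Int.gcd (a-1) (a+1) : ℤ) ∣ 2 := by
        have := dvd_sub h2 h1
        simpa using this
      have h4 : Int.gcd (a-1) (a+1) ∣ 2 := by exact_mod_cast h3
      rcases (Nat.dvd_prime Nat.prime_two).mp h4 with h5 | h5
      · exact h5
      · exfalso
        rw [h5] at h1
        obtain ⟨t, ht⟩ := h1
        omega
    have hsdvd : s ∣ (a-1)*(a+1) := ⟨b^2, hfact⟩
    rcases hsp.dvd_or_dvd hsdvd with ⟨k1, hk1⟩ | ⟨k1, hk1⟩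
    · -- a - 1 = s * k1
      have hk1pos : 0 < k1 := by nlinarith
      have hprod : k1 * (a+1) = b^2 := by
        have hc : s*(k1*(a+1)) = s*b^2 := by rw [← hfact, hk1]; ring
        exact mul_left_cancel₀ hsp.ne_zero hc
      have hcop2 : IsCoprime k1 (a+1) :=
        IsCoprime.of_isCoprime_of_dvd_left hcop ⟨s, by rw [hk1]; ring⟩
      obtain ⟨n, hn⟩ := sq_pos_of_coprime hcop2 hprod hk1pos
      obtain ⟨m, hm⟩ := sq_pos_of_coprime hcop2.symm (by rw [mul_comm]; exact hprod) (by omega)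
      have hbsq : (b - n*m)*(b + n*m) = 0 := by
        have : b^2 = (n*m)^2 := by rw [← hprod, hn, hm]; ring
        linear_combination this
      rcases mul_eq_zero.mp hbsq with h0 | h0
      · exact ⟨n, m, by linear_combination -hm - s*hn - hk1, by linear_combination -h0⟩
      · exact ⟨-n, m, by linear_combination -hm - s*hn - hk1, by linear_combination -h0⟩
    · -- a + 1 = s * k1
      have hk1pos : 0 < k1 := by nlinarith
      have hprod : (a-1) * k1 = b^2 := by
        have hc : s*((a-1)*k1) = s*b^2 := by rw [← hfact, hk1]; ring
        exact mul_left_cancel₀ hsp.ne_zero hc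
      have hcop2 : IsCoprime (a-1) k1 :=
        IsCoprime.of_isCoprime_of_dvd_right hcop ⟨s, by rw [hk1]; ring⟩
      obtain ⟨m, hm⟩ := sq_pos_of_coprime hcop2 hprod (by omega)
      obtain ⟨n, hn⟩ := sq_pos_of_coprime hcop2.symm (by rw [mul_comm]; exact hprod) hk1pos
      have hbsq : (b - m*n)*(b + m*n) = 0 := by
        have : b^2 = (m*n)^2 := by rw [← hprod, hn, hm]; ring
        linear_combination this
      rcases mul_eq_zero.mp hbsq with h0 | h0
      · exact ⟨n, m, by linear_combination -hm - s*hn - hk1, by linear_combination -h0⟩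
      · exact ⟨-n, m, by linear_combination -hm - s*hn - hk1, by linear_combination -h0⟩
  · -- a odd
    -- b is even
    rcases Int.even_or_odd b with ⟨c, hc⟩ | ⟨c, hc⟩
    · -- b = c + c
      have hxy : k*(k+1) = s*c^2 := by
        have h4 : (4:ℤ)*(k*(k+1)) = 4*(s*c^2) := by
          rw [hk, hc] at h; linear_combination h
        exact mul_left_cancel₀ (by norm_num) h4
      have hkpos : 1 ≤ k := by omega
      have hcop : IsCoprime k (k+1) := ⟨-1, 1, by ring⟩
      have hsdvd : s ∣ k*(k+1) := ⟨c^2, hxy⟩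
      rcases hsp.dvd_or_dvd hsdvd with ⟨j, hj⟩ | ⟨j, hj⟩
      · -- k = s*j : good case
        right
        have hjpos : 0 < j := by nlinarith
        have hprod : (k+1) * j = c^2 := by
          have hcc : s*((k+1)*j) = s*c^2 := by rw [← hxy, hj]; ring
          exact mul_left_cancel₀ hsp.ne_zero hcc
        have hcop2 : IsCoprime (k+1) j :=
          IsCoprime.of_isCoprime_of_dvd_right hcop.symm ⟨s, by rw [hj]; ring⟩
        obtain ⟨m, hm⟩ := sq_pos_of_coprime hcop2 hprod (by omega)
        obtain ⟨n, hn⟩ := sq_pos_of_coprime hcop2.symm (by rw [mul_comm]; exact hprod) hjpos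
        have hbsq : (c - m*n)*(c + m*n) = 0 := by
          have : c^2 = (m*n)^2 := by rw [← hprod, hn, hm]; ring
          linear_combination this
        rcases mul_eq_zero.mp hbsq with h0 | h0
        · refine ⟨n, m, ?_, ?_, ?_⟩
          · linear_combination -hm - s*hn - hj - hk
          · linear_combination -2*h0 - hc
          · linear_combination -hm + s*hn + hj
        · refine ⟨-n, m, ?_, ?_, ?_⟩
          · linear_combination -hm - s*hn - hj - hk
          · linear_combination -2*h0 - hc
          · linear_combination -hm + s*hn + hj
      · -- k + 1 = s*j : impossible
        exfalso
        have hprod : k * j = c^2 := by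
          have hcc : s*(k*j) = s*c^2 := by rw [← hxy, hj]; ring
          exact mul_left_cancel₀ hsp.ne_zero hcc
        have hcop2 : IsCoprime k j :=
          IsCoprime.of_isCoprime_of_dvd_right hcop ⟨s, by rw [hj]; ring⟩
        obtain ⟨n, hn⟩ := sq_pos_of_coprime hcop2 hprod (by omega)
        exact hneg n ⟨j, by rw [← hn]; linarith [hj]⟩
    · -- b odd: impossible
      exfalso
      obtain ⟨t, ht⟩ : ∃ t, s = 2*t+1 := ⟨s/2, by omega⟩
      have hodd1 : Odd (s*(4*c^2+4*c+1)) := Odd.mul ⟨t, by omega⟩ ⟨2*c^2+2*c, by ring⟩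
      have heven : s*(4*c^2+4*c+1) = 2*(2*k^2+2*k) := by
        rw [hk, hc] at h; linear_combination -h
      rw [heven] at hodd1
      exact (Int.not_odd_iff_even.mpr ⟨2*k^2+2*k, by ring⟩) hodd1

end aux

theorem eps_s_eq_two_mul_sq
    (s : ℕ) (hs : s.Prime) (hs4 : s % 4 = 3)
    (ε : ℂˣ) (hε : IsFundamentalUnit (quadF s) ε) :
    ∃ u : ℂ, u ∈ quadF s ∧ (ε : ℂ) = 2 * u ^ 2 := by
  obtain ⟨⟨hεK, hεint, hεinvint⟩, hεim, hεre, hεgen⟩ := hε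
  set rc : ℂ := ((Real.sqrt s : ℝ) : ℂ) with hrc
  have hsq : rc ^ 2 = (s:ℂ) := rc_sq s
  have hs2 : 2 ≤ s := hs.two_le
  haveI : Fact s.Prime := ⟨hs⟩
  -- -1 is not a square mod s
  have hneg : ∀ z : ℤ, ¬ (s:ℤ) ∣ z^2 + 1 := by
    intro z hdvd
    have h0 : ((z^2 + 1 : ℤ) : ZMod s) = 0 :=
      (ZMod.intCast_zmod_eq_zero_iff_dvd _ s).mpr hdvd
    have h1 : ((z : ZMod s))^2 = -1 := by push_cast at h0; linear_combination h0
    have h2 : IsSquare (-1 : ZMod s) := ⟨(z : ZMod s), by rw [← h1]; ring⟩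
    exact (ZMod.exists_sq_eq_neg_one_iff.mp h2) hs4
  -- integer representations of ε and ε⁻¹
  obtain ⟨a, b, hab⟩ := int_repr hs hs4 hεK hεint
  have hinvK : ((ε⁻¹ : ℂˣ) : ℂ) ∈ quadF s := by
    rw [Units.val_inv_eq_inv_val]
    exact (quadF s).inv_mem hεK
  obtain ⟨a', b', hab'⟩ := int_repr hs hs4 hinvK hεinvint
  -- multiply : norm is ±1
  have hmul : ((a:ℂ) + b*rc) * ((a':ℂ) + b'*rc) = 1 := by
    rw [← hab, ← hab']; exact ε.mul_inv
  have hexp : (((a*a' + s*b*b' - 1 : ℤ) : ℚ) : ℂ)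
      + (((a*b' + a'*b : ℤ) : ℚ) : ℂ) * rc = 0 := by
    push_cast
    linear_combination hmul - (b:ℂ)*(b':ℂ)*hsq
  obtain ⟨u1, u2⟩ := repr_unique hs hexp
  have e1 : a*a' + (s:ℤ)*b*b' = 1 := by
    have h' : (a*a' + (s:ℤ)*b*b' - 1 : ℤ) = 0 := by exact_mod_cast u1
    linarith
  have e2 : a*b' + a'*b = 0 := by exact_mod_cast u2
  have hNN : (a^2 - s*b^2) * (a'^2 - s*b'^2) = 1 := by
    linear_combination (a*a' + (s:ℤ)*b*b' + 1) * e1 - ((s:ℤ)*(a*b'+a'*b)) * e2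
  -- real estimates
  have hsrpos : 0 < Real.sqrt s := Real.sqrt_pos.mpr (by positivity)
  have hsqr : (Real.sqrt s)^2 = (s:ℝ) := Real.sq_sqrt (by positivity)
  have hre : (ε : ℂ) = (((a:ℝ) + b*Real.sqrt s : ℝ) : ℂ) := by
    rw [hab]; push_cast; ring
  have hX : 1 < (a:ℝ) + b*Real.sqrt s := by
    have := hεre
    rw [hre, Complex.ofReal_re] at this
    exact this
  -- norm = 1 (not -1)
  rcases Int.eq_one_or_neg_one_of_mul_eq_one' hNN with ⟨hN, _⟩ | ⟨hN, _⟩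
  swap
  · exfalso
    exact hneg a ⟨b^2, by linarith [hN]⟩
  -- bounds on a, b
  have hXY : ((a:ℝ) + b*Real.sqrt s) * ((a:ℝ) - b*Real.sqrt s) = 1 := by
    have hNr : (a:ℝ)^2 - s*(b:ℝ)^2 = 1 := by exact_mod_cast hN
    linear_combination hNr - (b:ℝ)^2 * hsqr
  have hYpos : 0 < (a:ℝ) - b*Real.sqrt s := by nlinarith
  have hYlt : (a:ℝ) - b*Real.sqrt s < 1 := by nlinarith
  have hbpos : 0 < b := by
    have : (0:ℝ) < (b:ℝ) := by nlinarith
    exact_mod_cast this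
  have hapos : 2 ≤ a := by
    have h2a : (1:ℝ) < 2*(a:ℝ) := by nlinarith
    have ha1 : 1 ≤ a := by
      have : (1:ℤ) < 2*a := by exact_mod_cast (by exact_mod_cast h2a : (1:ℝ) < ((2*a : ℤ) : ℝ))
      omega
    rcases eq_or_lt_of_le ha1 with h1 | h1
    · exfalso
      have : (s:ℤ)*b^2 = 0 := by rw [← h1] at hN; linarith [hN]
      nlinarith [hbpos, (by exact_mod_cast hs2 : (2:ℤ) ≤ (s:ℤ))]
    · omega
  -- the number-theoretic dichotomy
  have hspZ : Prime (s:ℤ) := Int.prime_iff_natAbs_prime.mpr (by simpa using hs)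
  have hsoddZ : (s:ℤ) % 2 = 1 := by omega
  rcases nt_core (s:ℤ) a b hspZ (by positivity) hsoddZ hneg hapos hbpos hN with
    ⟨m, n, h1, h2⟩ | ⟨m, n, h1, h2, h3⟩
  · -- good case : ε = 2 * ((n + m√s)/2)^2
    refine ⟨((n:ℂ) + (m:ℂ)*rc)/2, ?_, ?_⟩
    · have hmem := repr_mem s ((n:ℚ)/2) ((m:ℚ)/2)
      have heq : (((n:ℚ)/2 : ℚ) : ℂ) + (((m:ℚ)/2 : ℚ) : ℂ) * ((Real.sqrt s : ℝ) : ℂ)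
          = ((n:ℂ) + (m:ℂ)*rc)/2 := by
        push_cast; ring
      rw [← heq]; exact hmem
    · have h1c : ((n:ℂ))^2 + (s:ℂ)*(m:ℂ)^2 = 2*(a:ℂ) := by exact_mod_cast h1
      have h2c : (n:ℂ)*(m:ℂ) = (b:ℂ) := by exact_mod_cast h2
      rw [hab]
      field_simp
      linear_combination -h1c - 2*((Real.sqrt s : ℝ) : ℂ)*h2c - (m:ℂ)^2*(rc_sq s)
  · -- bad case : ε is the square of a unit, contradiction with fundamentality
    exfalso
    set v : ℂ := (n:ℂ) + (m:ℂ)*rc with hv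
    have h1c : ((n:ℂ))^2 + (s:ℂ)*(m:ℂ)^2 = (a:ℂ) := by exact_mod_cast h1
    have h2c : 2*((n:ℂ)*(m:ℂ)) = (b:ℂ) := by exact_mod_cast h2
    have h3c : ((n:ℂ))^2 - (s:ℂ)*(m:ℂ)^2 = 1 := by exact_mod_cast h3
    have hv2 : v^2 = (ε : ℂ) := by
      rw [hab, hv]
      linear_combination h1c + rc*h2c + (m:ℂ)^2*hsq
    have hvinv : v * ((n:ℂ) - (m:ℂ)*rc) = 1 := by
      rw [hv]
      linear_combination h3c - (m:ℂ)^2*hsq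
    set V : ℂˣ := Units.mkOfMulEqOne v _ hvinv with hV
    have hVval : (V : ℂ) = v := rfl
    have hVinvval : ((V⁻¹ : ℂˣ) : ℂ) = (n:ℂ) - (m:ℂ)*rc := rfl
    have hVmem : V ∈ unitsOf (quadF s) := by
      refine ⟨?_, ?_, ?_⟩
      · rw [hVval, hv]
        have := repr_mem s (n:ℚ) (m:ℚ)
        push_cast at this
        exact this
      · rw [hVval, hv]
        have hni : IsIntegral ℤ ((n:ℂ)) := by simpa using isIntegral_algebraMap (R := ℤ) (A := ℂ) (x := n)
        have hmi : IsIntegral ℤ ((m:ℂ)) := by simpa using isIntegral_algebraMap (R := ℤ) (A := ℂ) (x := m)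
        exact hni.add (hmi.mul (rc_int s))
      · rw [hVinvval]
        have hni : IsIntegral ℤ ((n:ℂ)) := by simpa using isIntegral_algebraMap (R := ℤ) (A := ℂ) (x := n)
        have hmi : IsIntegral ℤ ((m:ℂ)) := by simpa using isIntegral_algebraMap (R := ℤ) (A := ℂ) (x := m)
        exact hni.sub (hmi.mul (rc_int s))
    obtain ⟨k, hk⟩ := hεgen V hVmem
    have hVsq : V^2 = ε^(2*k) := by
      have h2k : ε^(2*k) = (ε^k)^2 := by
        rw [mul_comm, zpow_mul]
        exact zpow_ofNat _ 2
      rcases hk with hk | hk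
      · rw [hk, h2k]
      · rw [hk, h2k, neg_sq]
    -- pass to ℝ
    set x : ℝ := (ε : ℂ).re with hx
    have hεx : (ε : ℂ) = (x : ℂ) := by
      apply Complex.ext
      · simp [hx]
      · simp [hεim]
    have hxc : ((x:ℂ))^(2*k) = (x:ℂ) := by
      have hcc := congrArg (Units.val) hVsq
      rw [Units.val_pow_eq_pow_val, Units.val_zpow_eq_zpow_val] at hcc
      rw [hVval, hv2, hεx] at hcc
      exact hcc.symm
    have hxr : x^(2*k) = x := by
      rw [← Complex.ofReal_zpow] at hxc
      exact_mod_cast hxc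
    have hinj := zpow_right_injective₀ (by linarith : (0:ℝ) < x) (by linarith : x ≠ 1)
    have : (2*k) = 1 := hinj (by show x^(2*k) = x^(1:ℤ); rw [hxr, zpow_one])
    omega
end
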